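/- arXiv:0911.1271 — 5 statements merged into one kernel-verified Lean document; each statement's English description precedes it below -/
import Mathlib

section
/- Let N and m be coprime integers with m > N > 1, let W_{N,m} = { w ∈ ℤ_{>0} : w = βm − αN for some integers α ≥ 1 and 1 ≤ β ≤ N−1 }, and set g = (N−1)(m−1)/2. Then the sum of the elements of W_{N,m} equals (N²−1)(m²−1)/24 + g(g−1)/2. Equivalently, writing W_{N,m} = {w₁ < ⋯ < w_g} and w = Σ_{k=1}^{g} (w_k − k), one has w + g = (N²−1)(m²−1)/24. -/
/-!
Index `W_{N,m}` by the pairs `(β, α)` with `1 ≤ β ≤ N - 1` and `1 ≤ α ≤ ⌊βm/N⌋`; this is a bijection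
because `m` is invertible modulo `N`. For fixed `β`, with `βm = qN + r`, the column sum
`Σ_{α ≤ q} (βm - αN)` is an arithmetic series, and `2N` times it equals `(βm)² - Nβm + r(N - r)`.
As `β` runs over `1, …, N - 1` so does the residue `r = βm mod N`, so summing over `β` leaves
only sums of `k` and `k²` over `1 ≤ k ≤ N - 1`.
-/

open Finset

lemma six_mul_sum_Icc_one_quadratic (a b c : ℤ) {n : ℤ} (hn : 0 ≤ n) :
    6 * ∑ k ∈ Icc 1 n, (a * k ^ 2 + b * k + c)
      = a * n * (n + 1) * (2 * n + 1) + 3 * b * n * (n + 1) + 6 * c * n := by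
  induction n, hn using Int.leInduction with
  | base => simp
  | succ n hn ih =>
    rw [← insert_Icc_right_eq_Icc_add_one (by omega), sum_insert (by simp), mul_add, ih]
    ring

section Coprime

variable {N m : ℤ}

lemma emod_mul_mem_Icc_of_isCoprime (hcop : IsCoprime N m) {β : ℤ} (hβ : β ∈ Icc 1 (N - 1)) :
    β * m % N ∈ Icc 1 (N - 1) := by
  rw [mem_Icc] at hβ ⊢
  have hN : 0 < N := by omega
  have hne : β * m % N ≠ 0 := fun h =>
    absurd (Int.le_of_dvd (by omega) (hcop.dvd_of_dvd_mul_right (Int.dvd_of_emod_eq_zero h)))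
      (by omega)
  have := Int.emod_nonneg (β * m) hN.ne'
  have := Int.emod_lt_of_pos (β * m) hN
  omega

lemma injOn_emod_mul_of_isCoprime (hcop : IsCoprime N m) :
    Set.InjOn (fun β => β * m % N) (Icc 1 (N - 1) : Set ℤ) := by
  intro x hx y hy hxy
  simp only [coe_Icc, Set.mem_Icc] at hx hy
  have hdvd : N ∣ y - x :=
    hcop.dvd_of_dvd_mul_right (by simpa [sub_mul] using Int.ModEq.dvd hxy)
  by_contra hne
  have := Int.le_of_dvd (abs_pos.mpr (sub_ne_zero.mpr (Ne.symm hne))) ((dvd_abs _ _).mpr hdvd)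
  have := abs_le.mpr (⟨by omega, by omega⟩ : -(N - 2) ≤ y - x ∧ y - x ≤ N - 2)
  omega

lemma sum_Icc_emod_mul_of_isCoprime {M : Type*} [AddCommMonoid M] (hcop : IsCoprime N m)
    (f : ℤ → M) :
    ∑ β ∈ Icc 1 (N - 1), f (β * m % N) = ∑ k ∈ Icc 1 (N - 1), f k :=
  sum_nbij _ (fun _ => emod_mul_mem_Icc_of_isCoprime hcop) (injOn_emod_mul_of_isCoprime hcop)
    (surjOn_of_injOn_of_card_le _ (fun _ => emod_mul_mem_Icc_of_isCoprime hcop)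
      (injOn_emod_mul_of_isCoprime hcop) le_rfl) fun _ _ => rfl

end Coprime

lemma two_mul_mul_sum_Icc_ediv {N x : ℤ} (hN : 0 < N) (hx : 0 ≤ x) :
    2 * N * ∑ α ∈ Icc 1 (x / N), (x - α * N)
      = x ^ 2 - N * x + N * (x % N) - (x % N) ^ 2 := by
  have hsum := six_mul_sum_Icc_one_quadratic 0 (-N) x (Int.ediv_nonneg hx hN.le)
  have hdiv := Int.mul_ediv_add_emod x N
  simp only [zero_mul, zero_add] at hsum
  simp_rw [show ∀ α : ℤ, x - α * N = -N * α + x by intro α; ring]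
  refine mul_left_cancel₀ (three_ne_zero (α := ℤ)) ?_
  linear_combination N * hsum + 3 * (x - N * (x / N) + x % N - N) * hdiv

noncomputable def gapIndex (N m : ℤ) : Finset (Σ _ : ℤ, ℤ) :=
  (Icc 1 (N - 1)).sigma fun β => Icc 1 (β * m / N)

section GapIndex

variable {N m : ℤ}

lemma setOf_gap_eq_image_gapIndex (hN : 0 < N) (hcop : IsCoprime N m) :
    {w : ℤ | 0 < w ∧ ∃ α β : ℤ, 1 ≤ α ∧ 1 ≤ β ∧ β ≤ N - 1 ∧ w = β * m - α * N}
      = ↑((gapIndex N m).image fun p => p.1 * m - p.2 * N) := by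
  ext w
  simp only [gapIndex, Set.mem_ofPred_eq, coe_image, Set.mem_image, mem_coe, mem_sigma, mem_Icc,
    Int.le_ediv_iff_mul_le hN, Sigma.exists]
  constructor
  · rintro ⟨hw, α, β, hα, hβ₁, hβ₂, rfl⟩
    exact ⟨β, α, ⟨⟨hβ₁, hβ₂⟩, hα, by omega⟩, rfl⟩
  · rintro ⟨β, α, ⟨hβ, hα₁, hα₂⟩, rfl⟩
    have hres := mem_Icc.mp (emod_mul_mem_Icc_of_isCoprime hcop (mem_Icc.mpr hβ))
    -- `N ∤ βm`, so `αN ≤ βm` is strict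
    have hne : α * N ≠ β * m := fun h => by simp [← h] at hres
    exact ⟨by omega, α, β, hα₁, hβ.1, hβ.2, rfl⟩

lemma injOn_gapIndex (hcop : IsCoprime N m) :
    Set.InjOn (fun p : Σ _ : ℤ, ℤ => p.1 * m - p.2 * N) (gapIndex N m : Set (Σ _ : ℤ, ℤ)) := by
  rintro ⟨β₁, α₁⟩ h₁ ⟨β₂, α₂⟩ h₂ hw
  simp only [gapIndex, coe_sigma, Set.mem_sigma_iff, mem_coe] at h₁ h₂ hw
  have hβ : β₁ = β₂ := injOn_emod_mul_of_isCoprime hcop (mem_coe.mpr h₁.1) (mem_coe.mpr h₂.1)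
    (Int.modEq_iff_dvd.mpr ⟨α₂ - α₁, by linarith⟩ : β₁ * m ≡ β₂ * m [ZMOD N])
  subst hβ
  have hN : N ≠ 0 := by have := mem_Icc.mp h₁.1; omega
  have hα : α₁ = α₂ := mul_right_cancel₀ hN (by linarith)
  rw [hα]

end GapIndex

/-- For coprime integers `m > N > 1` and `g = (N−1)(m−1)/2`, the sum of the
elements of `W_{N,m} = { w > 0 : w = β*m − α*N, α ≥ 1, 1 ≤ β ≤ N−1 }` equals
`(N²−1)(m²−1)/24 + g(g−1)/2`; stated here after clearing denominators:
`24 * Σ = (N²−1)(m²−1) + 12*g*(g−1)`. -/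
theorem gap_set_sum
    (N m : ℤ) (hN : 1 < N) (hm : N < m) (hcop : IsCoprime N m)
    (g : ℤ) (hg : 2 * g = (N - 1) * (m - 1)) :
    24 * (∑ᶠ w ∈ {w : ℤ | 0 < w ∧ ∃ α β : ℤ, 1 ≤ α ∧ 1 ≤ β ∧ β ≤ N - 1 ∧
        w = β * m - α * N}, w)
      = (N ^ 2 - 1) * (m ^ 2 - 1) + 12 * g * (g - 1) := by
  have hN0 : 0 < N := by omega
  rw [setOf_gap_eq_image_gapIndex hN0 hcop, finsum_mem_coe_finset,
    sum_image (injOn_gapIndex hcop), gapIndex, sum_sigma]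
  have hcols : 2 * N * ∑ β ∈ Icc 1 (N - 1), ∑ α ∈ Icc 1 (β * m / N), (β * m - α * N)
      = ∑ k ∈ Icc 1 (N - 1), ((m ^ 2 - 1) * k ^ 2 + (N - N * m) * k + 0) :=
    calc _ = ∑ β ∈ Icc 1 (N - 1),
            ((m ^ 2 * β ^ 2 - N * m * β) + (N * (β * m % N) - (β * m % N) ^ 2)) := by
          rw [mul_sum]
          refine sum_congr rfl fun β hβ => ?_
          have hβm : 0 ≤ β * m := mul_nonneg (by linarith [(mem_Icc.mp hβ).1]) (by omega)
          rw [two_mul_mul_sum_Icc_ediv hN0 hβm]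
          ring
      _ = ∑ β ∈ Icc 1 (N - 1), (m ^ 2 * β ^ 2 - N * m * β)
            + ∑ k ∈ Icc 1 (N - 1), (N * k - k ^ 2) := by
          rw [sum_add_distrib, sum_Icc_emod_mul_of_isCoprime hcop fun r => N * r - r ^ 2]
      _ = _ := by
          rw [← sum_add_distrib]
          exact sum_congr rfl fun k _ => by ring
  have hquad := six_mul_sum_Icc_one_quadratic (m ^ 2 - 1) (N - N * m) 0 (by omega : 0 ≤ N - 1)
  refine mul_left_cancel₀ hN0.ne' ?_
  linear_combination 12 * hcols + 2 * hquad - N * (6 * g + 3 * (N - 1) * (m - 1) - 6) * hg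
end

section
/- Let N and m be coprime integers with m > N > 1, let W_{N,m} = { w ∈ ℤ_{>0} : w = βm − αN for some integers α ≥ 1 and 1 ≤ β ≤ N−1 }, set g = (N−1)(m−1)/2, and write W_{N,m} = {w₁ < w₂ < ⋯ < w_g}. Define π_k = w_{g−k+1} + k − g for k = 1, …, g. Then (π₁, …, π_g) is a non-increasing sequence of positive integers, and the Young diagram whose k-th row has length π_k is self-conjugate, i.e. equal to its own transpose. -/
/-!
The gaps of the numerical semigroup `⟨N, m⟩` form a symmetric set: every integer has a unique
representation `βm − αN` with `0 ≤ β < N`, and passing from `y` to `F − y`, where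
`F = Nm − N − m`, replaces `(α, β)` by `(1 − α, N − 1 − β)`, so exactly one of `y`, `F − y` is a
gap. For the gap `w_a` (with `a = g − i + 1`) the row `π_i = w_a − (a − 1)` counts the non-gaps
in `[0, w_a)`, and `y ↦ F − y` matches these with the gaps exceeding `F − w_a`. Hence
`j ≤ π_i ↔ F < w_{g−i+1} + w_{g−j+1}`, which is symmetric in `i` and `j`.
-/

open scoped Finset

def gapSet (N m : ℤ) : Set ℤ :=
  {x | 0 < x ∧ ∃ α β : ℤ, 1 ≤ α ∧ 1 ≤ β ∧ β ≤ N - 1 ∧ x = β * m - α * N}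

namespace IsCoprime

variable {N m : ℤ}

theorem exists_eq_mul_sub_mul (hcop : IsCoprime N m) (hN : 0 < N) (y : ℤ) :
    ∃ α β : ℤ, 0 ≤ β ∧ β < N ∧ y = β * m - α * N := by
  obtain ⟨u, v, huv⟩ := hcop
  refine ⟨-(y * u + y * v / N * m), y * v % N, Int.emod_nonneg _ hN.ne',
    Int.emod_lt_of_pos _ hN, ?_⟩
  linear_combination (-y) * huv - m * Int.mul_ediv_add_emod (y * v) N

theorem eq_of_mul_sub_mul_eq (hcop : IsCoprime N m) {α β α' β' : ℤ}
    (hβ : 0 ≤ β ∧ β < N) (hβ' : 0 ≤ β' ∧ β' < N) (h : β * m - α * N = β' * m - α' * N) :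
    α = α' ∧ β = β' := by
  have hdvd : N ∣ β - β' := hcop.dvd_of_dvd_mul_right ⟨α - α', by linear_combination h⟩
  have hββ' : β = β' := by
    have := Int.eq_zero_of_abs_lt_dvd hdvd (abs_sub_lt_iff.mpr ⟨by omega, by omega⟩)
    omega
  subst hββ'
  have : (α - α') * N = 0 := by linear_combination -h
  exact ⟨by simpa [sub_eq_zero, (show N ≠ 0 by omega)] using this, rfl⟩

theorem mul_sub_mul_mem_gapSet_iff (hcop : IsCoprime N m) {α β : ℤ} (hβ : 0 ≤ β ∧ β < N) :
    β * m - α * N ∈ gapSet N m ↔ 0 < β * m - α * N ∧ 1 ≤ α := by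
  constructor
  · rintro ⟨hpos, α', β', hα', hβ'1, hβ'2, h⟩
    exact ⟨hpos, (hcop.eq_of_mul_sub_mul_eq hβ ⟨by omega, by omega⟩ h).1 ▸ hα'⟩
  · rintro ⟨hpos, hα⟩
    obtain rfl | hβ1 := hβ.1.eq_or_lt
    · nlinarith
    · exact ⟨hpos, α, β, hα, hβ1, by omega, rfl⟩

end IsCoprime

theorem mem_gapSet_iff_sub_notMem {N m : ℤ} (hcop : IsCoprime N m) (hN : 0 < N) {y : ℤ}
    (hy : y ∈ Set.Icc 0 (N * m - N - m)) :
    y ∈ gapSet N m ↔ N * m - N - m - y ∉ gapSet N m := by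
  obtain ⟨α, β, hβ0, hβN, rfl⟩ := hcop.exists_eq_mul_sub_mul hN y
  have hzero : β * m - α * N = 0 → α = 0 := fun h =>
    (hcop.eq_of_mul_sub_mul_eq ⟨hβ0, hβN⟩ ⟨le_rfl, hN⟩ (by linear_combination h)).1
  have htop : β * m - α * N = N * m - N - m → α = 1 := fun h =>
    (hcop.eq_of_mul_sub_mul_eq ⟨hβ0, hβN⟩ ⟨by omega, by omega⟩
      (show _ = (N - 1) * m - 1 * N by linear_combination h)).1
  have hreflect : N * m - N - m - (β * m - α * N) = (N - 1 - β) * m - (1 - α) * N := by ring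
  rw [hcop.mul_sub_mul_mem_gapSet_iff ⟨hβ0, hβN⟩, hreflect,
    hcop.mul_sub_mul_mem_gapSet_iff ⟨by omega, by omega⟩, ← hreflect]
  obtain ⟨hy0, hyF⟩ := hy
  generalize β * m - α * N = y at *
  omega

theorem le_of_mem_gapSet {N m x : ℤ} (hN : 0 ≤ N) (hm : 0 ≤ m) (hx : x ∈ gapSet N m) :
    x ≤ N * m - N - m := by
  obtain ⟨-, α, β, hα, -, hβ, rfl⟩ := hx
  nlinarith [mul_nonneg (sub_nonneg.mpr hβ) hm, mul_nonneg (sub_nonneg.mpr hα) hN]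

structure IsSymmetricGapSet (S : Set ℤ) (F : ℤ) : Prop where
  subset_Ioc : S ⊆ Set.Ioc 0 F
  mem_iff_sub_notMem : ∀ y ∈ Set.Icc 0 F, y ∈ S ↔ F - y ∉ S

theorem isSymmetricGapSet_gapSet {N m : ℤ} (hN : 0 < N) (hm : 0 ≤ m) (hcop : IsCoprime N m) :
    IsSymmetricGapSet (gapSet N m) (N * m - N - m) where
  subset_Ioc _ hx := ⟨hx.1, le_of_mem_gapSet hN.le hm hx⟩
  mem_iff_sub_notMem _ hy := mem_gapSet_iff_sub_notMem hcop hN hy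

namespace StrictMonoOn

variable {w : ℕ → ℤ} {g : ℕ}

theorem card_filter_lt_apply (hw : StrictMonoOn w (Set.Icc 1 g)) {a : ℕ}
    (ha : a ∈ Set.Icc 1 g) : #{k ∈ Finset.Icc 1 g | w k < w a} = a - 1 := by
  have : {k ∈ Finset.Icc 1 g | w k < w a} = Finset.Ico 1 a := by
    ext k
    simp only [Finset.mem_filter, Finset.mem_Icc, Finset.mem_Ico]
    constructor
    · rintro ⟨hk, hlt⟩
      exact ⟨hk.1, (hw.lt_iff_lt hk ha).mp hlt⟩
    · rintro ⟨hk1, hka⟩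
      have hk : k ∈ Set.Icc 1 g := ⟨hk1, hka.le.trans ha.2⟩
      exact ⟨hk, (hw.lt_iff_lt hk ha).mpr hka⟩
  rw [this, Nat.card_Ico]

theorem le_card_filter_lt_iff (hw : StrictMonoOn w (Set.Icc 1 g)) {j : ℕ}
    (hj : j ∈ Set.Icc 1 g) (t : ℤ) :
    j ≤ #{k ∈ Finset.Icc 1 g | t < w k} ↔ t < w (g - j + 1) := by
  obtain ⟨hj1, hjg⟩ := hj
  have hj' : g - j + 1 ∈ Set.Icc 1 g := ⟨by omega, by omega⟩
  constructor
  · intro hcard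
    by_contra! hle
    have : {k ∈ Finset.Icc 1 g | t < w k} ⊆ Finset.Icc (g - j + 2) g := by
      intro k hk
      simp only [Finset.mem_filter, Finset.mem_Icc] at hk ⊢
      refine ⟨?_, hk.1.2⟩
      by_contra! hkj
      exact ((hw.monotoneOn hk.1 hj' (by omega)).trans hle).not_gt hk.2
    have := Finset.card_le_card this
    rw [Nat.card_Icc] at this
    omega
  · intro hlt
    have : Finset.Icc (g - j + 1) g ⊆ {k ∈ Finset.Icc 1 g | t < w k} := by
      intro k hk
      simp only [Finset.mem_filter, Finset.mem_Icc] at hk ⊢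
      have hk' : k ∈ Set.Icc 1 g := ⟨by omega, hk.2⟩
      exact ⟨hk', hlt.trans_le (hw.monotoneOn hj' hk' hk.1)⟩
    have := Finset.card_le_card this
    rw [Nat.card_Icc] at this
    omega

end StrictMonoOn

structure IsSortedEnumeration (w : ℕ → ℤ) (g : ℕ) (S : Set ℤ) : Prop where
  strictMonoOn : StrictMonoOn w (Set.Icc 1 g)
  mapsTo : Set.MapsTo w (Set.Icc 1 g) S
  surjOn : Set.SurjOn w (Set.Icc 1 g) S

def gapRow (w : ℕ → ℤ) (g k : ℕ) : ℤ := w (g - k + 1) + k - g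

theorem StrictMonoOn.gapRow_succ_le {w : ℕ → ℤ} {g : ℕ} (hw : StrictMonoOn w (Set.Icc 1 g))
    {k : ℕ} (hk : 1 ≤ k) (hkg : k < g) : gapRow w g (k + 1) ≤ gapRow w g k := by
  have : w (g - k) < w (g - k + 1) := hw ⟨by omega, by omega⟩ ⟨by omega, by omega⟩ (by omega)
  rw [gapRow, gapRow, show g - (k + 1) + 1 = g - k by omega]
  push_cast
  omega

namespace IsSortedEnumeration

variable {S : Set ℤ} {F : ℤ} {g : ℕ} {w : ℕ → ℤ}

theorem card_filter_mem_Ico_eq (hw : IsSortedEnumeration w g S) (hS : S ⊆ Set.Ici 0)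
    [DecidablePred (· ∈ S)] (x : ℤ) :
    #{y ∈ Finset.Ico 0 x | y ∈ S} = #{k ∈ Finset.Icc 1 g | w k < x} := by
  symm
  refine Finset.card_nbij w ?_
    (hw.strictMonoOn.injOn.mono fun k hk => by simpa using (Finset.mem_filter.mp hk).1) ?_
  · intro k hk
    simp only [Finset.coe_filter, Finset.mem_Icc, Finset.mem_Ico, Set.mem_ofPred_eq] at hk ⊢
    exact ⟨⟨hS (hw.mapsTo hk.1), hk.2⟩, hw.mapsTo hk.1⟩
  · intro y hy
    simp only [Finset.coe_filter, Finset.mem_Ico, Set.mem_ofPred_eq] at hy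
    obtain ⟨k, hk, rfl⟩ := hw.surjOn hy.2
    exact ⟨k, by simpa using ⟨hk, hy.1.2⟩, rfl⟩

theorem card_filter_notMem_Ico_apply (hw : IsSortedEnumeration w g S) (hS : S ⊆ Set.Ici 0)
    [DecidablePred (· ∈ S)] {a : ℕ} (ha : a ∈ Set.Icc 1 g) :
    (#{y ∈ Finset.Ico 0 (w a) | y ∉ S} : ℤ) = w a - a + 1 := by
  have htotal := Finset.card_filter_add_card_filter_not (s := Finset.Ico 0 (w a)) (· ∈ S)
  rw [hw.card_filter_mem_Ico_eq hS, hw.strictMonoOn.card_filter_lt_apply ha,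
    Int.card_Ico] at htotal
  have : 0 ≤ w a := hS (hw.mapsTo ha)
  have : 1 ≤ a := ha.1
  omega

theorem card_filter_notMem_Ico_eq (hw : IsSortedEnumeration w g S) (hS : IsSymmetricGapSet S F)
    [DecidablePred (· ∈ S)] {x : ℤ} (hx : x ≤ F + 1) :
    #{y ∈ Finset.Ico 0 x | y ∉ S} = #{k ∈ Finset.Icc 1 g | F - x < w k} := by
  symm
  refine Finset.card_nbij (fun k => F - w k) ?_
    ((sub_right_injective.comp_injOn hw.strictMonoOn.injOn).mono
      fun k hk => by simpa using (Finset.mem_filter.mp hk).1) ?_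
  · intro k hk
    simp only [Finset.coe_filter, Finset.mem_Icc, Finset.mem_Ico, Set.mem_ofPred_eq] at hk ⊢
    obtain ⟨hwk0, hwkF⟩ := hS.subset_Ioc (hw.mapsTo hk.1)
    refine ⟨⟨by omega, by omega⟩, ?_⟩
    rw [hS.mem_iff_sub_notMem _ ⟨by omega, by omega⟩, sub_sub_cancel, not_not]
    exact hw.mapsTo hk.1
  · intro y hy
    simp only [Finset.coe_filter, Finset.mem_Ico, Set.mem_ofPred_eq] at hy
    obtain ⟨k, hk, hwk⟩ :=
      hw.surjOn ((hS.mem_iff_sub_notMem y ⟨hy.1.1, by omega⟩).not_left.mp hy.2)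
    exact ⟨k, by simpa [hwk] using ⟨hk, hy.1.2⟩, by simp [hwk]⟩

theorem gapRow_eq_card (hw : IsSortedEnumeration w g S) (hS : IsSymmetricGapSet S F)
    {i : ℕ} (hi : i ∈ Set.Icc 1 g) :
    gapRow w g i = #{k ∈ Finset.Icc 1 g | F - w (g - i + 1) < w k} := by
  classical
  obtain ⟨hi1, hig⟩ := hi
  have ha : g - i + 1 ∈ Set.Icc 1 g := ⟨by omega, by omega⟩
  rw [← hw.card_filter_notMem_Ico_eq hS (by linarith [(hS.subset_Ioc (hw.mapsTo ha)).2]),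
    hw.card_filter_notMem_Ico_apply (fun y hy => (hS.subset_Ioc hy).1.le) ha, gapRow]
  omega

theorem gapRow_pos (hw : IsSortedEnumeration w g S) (hS : IsSymmetricGapSet S F)
    {i : ℕ} (hi : i ∈ Set.Icc 1 g) : 0 < gapRow w g i := by
  classical
  obtain ⟨hi1, hig⟩ := hi
  have ha : g - i + 1 ∈ Set.Icc 1 g := ⟨by omega, by omega⟩
  have hzero : 0 ∈ ({y ∈ Finset.Ico 0 (w (g - i + 1)) | y ∉ S} : Finset ℤ) := by
    simpa using ⟨(hS.subset_Ioc (hw.mapsTo ha)).1, fun h => (hS.subset_Ioc h).1.false⟩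
  have hrow := hw.card_filter_notMem_Ico_apply (fun y hy => (hS.subset_Ioc hy).1.le) ha
  have hcard := Finset.card_pos.mpr ⟨0, hzero⟩
  rw [gapRow]
  omega

theorem gapRow_le (hw : IsSortedEnumeration w g S) (hS : IsSymmetricGapSet S F)
    {i : ℕ} (hi : i ∈ Set.Icc 1 g) : gapRow w g i ≤ g := by
  rw [hw.gapRow_eq_card hS hi, Nat.cast_le]
  exact (Finset.card_filter_le _ _).trans (by simp)

theorem le_gapRow_iff (hw : IsSortedEnumeration w g S) (hS : IsSymmetricGapSet S F)
    {i j : ℕ} (hi : i ∈ Set.Icc 1 g) (hj : j ∈ Set.Icc 1 g) :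
    (j : ℤ) ≤ gapRow w g i ↔ F < w (g - i + 1) + w (g - j + 1) := by
  rw [hw.gapRow_eq_card hS hi, Nat.cast_le, hw.strictMonoOn.le_card_filter_lt_iff hj,
    sub_lt_iff_lt_add']

end IsSortedEnumeration

theorem gap_partition_selfconjugate_general
    (N m : ℤ) (hN : 1 < N) (hm : N < m) (hcop : IsCoprime N m)
    (g : ℕ)
    (w : ℕ → ℤ)
    (hmono : StrictMonoOn w (Set.Icc 1 g))
    (hmem : ∀ k : ℕ, 1 ≤ k → k ≤ g →
      w k ∈ {x : ℤ | 0 < x ∧ ∃ α β : ℤ, 1 ≤ α ∧ 1 ≤ β ∧ β ≤ N - 1 ∧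
        x = β * m - α * N})
    (hsurj : ∀ x ∈ {x : ℤ | 0 < x ∧ ∃ α β : ℤ, 1 ≤ α ∧ 1 ≤ β ∧ β ≤ N - 1 ∧
        x = β * m - α * N}, ∃ k : ℕ, 1 ≤ k ∧ k ≤ g ∧ w k = x)
    (π : ℕ → ℤ)
    (hπ : ∀ k : ℕ, 1 ≤ k → k ≤ g → π k = w (g - k + 1) + (k : ℤ) - (g : ℤ))
    (hπ0 : ∀ k : ℕ, g < k → π k = 0) :
    (∀ k : ℕ, 1 ≤ k → k ≤ g → 0 < π k) ∧
    (∀ k : ℕ, 1 ≤ k → k < g → π (k + 1) ≤ π k) ∧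
    (∀ i j : ℕ, 1 ≤ i → 1 ≤ j → ((j : ℤ) ≤ π i ↔ (i : ℤ) ≤ π j)) := by
  have hS := isSymmetricGapSet_gapSet (by omega) (by omega) hcop
  have hw : IsSortedEnumeration w g (gapSet N m) :=
    ⟨hmono, fun k hk => hmem k hk.1 hk.2, fun x hx => by
      obtain ⟨k, hk1, hkg, rfl⟩ := hsurj x hx
      exact ⟨k, ⟨hk1, hkg⟩, rfl⟩⟩
  have hrow : ∀ k ∈ Set.Icc 1 g, π k = gapRow w g k := fun k hk => hπ k hk.1 hk.2
  have hle : ∀ k, 1 ≤ k → π k ≤ g := fun k hk => by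
    rcases le_or_gt k g with hkg | hkg
    · exact hrow k ⟨hk, hkg⟩ ▸ hw.gapRow_le hS ⟨hk, hkg⟩
    · simp [hπ0 k hkg]
  refine ⟨fun k hk hkg => hrow k ⟨hk, hkg⟩ ▸ hw.gapRow_pos hS ⟨hk, hkg⟩,
    fun k hk hkg => ?_, fun i j hi hj => ?_⟩
  · rw [hrow k ⟨hk, hkg.le⟩, hrow (k + 1) ⟨by omega, hkg⟩]
    exact hmono.gapRow_succ_le hk hkg
  rcases le_or_gt i g with hig | hig <;> rcases le_or_gt j g with hjg | hjg
  · rw [hrow i ⟨hi, hig⟩, hrow j ⟨hj, hjg⟩, hw.le_gapRow_iff hS ⟨hi, hig⟩ ⟨hj, hjg⟩,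
      hw.le_gapRow_iff hS ⟨hj, hjg⟩ ⟨hi, hig⟩, add_comm]
  · have := hle i hi
    rw [hπ0 j hjg]
    omega
  · have := hle j hj
    rw [hπ0 i hig]
    omega
  · rw [hπ0 i hig, hπ0 j hjg]
    omega

/-- For coprime integers `m > N > 1`, `g = (N−1)(m−1)/2`, write the gap set
`W_{N,m} = {w₁ < w₂ < ⋯ < w_g}` (enumerated by `w : ℕ → ℤ` on indices
`1, …, g`). Define `π_k = w_{g−k+1} + k − g` for `1 ≤ k ≤ g` and `π_k = 0` for
`k > g`. Then `(π₁, …, π_g)` is a non-increasing sequence of positive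
integers, and the associated Young diagram (whose `k`-th row has `π_k` cells)
is self-conjugate: the cell `(i, j)` belongs to the diagram iff `(j, i)`
does. -/
theorem gap_partition_selfconjugate
    (N m : ℤ) (hN : 1 < N) (hm : N < m) (hcop : IsCoprime N m)
    (g : ℕ) (hg : (g : ℤ) * 2 = (N - 1) * (m - 1))
    (w : ℕ → ℤ)
    (hmono : StrictMonoOn w (Set.Icc 1 g))
    (hmem : ∀ k : ℕ, 1 ≤ k → k ≤ g →
      w k ∈ {x : ℤ | 0 < x ∧ ∃ α β : ℤ, 1 ≤ α ∧ 1 ≤ β ∧ β ≤ N - 1 ∧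
        x = β * m - α * N})
    (hsurj : ∀ x ∈ {x : ℤ | 0 < x ∧ ∃ α β : ℤ, 1 ≤ α ∧ 1 ≤ β ∧ β ≤ N - 1 ∧
        x = β * m - α * N}, ∃ k : ℕ, 1 ≤ k ∧ k ≤ g ∧ w k = x)
    (π : ℕ → ℤ)
    (hπ : ∀ k : ℕ, 1 ≤ k → k ≤ g → π k = w (g - k + 1) + (k : ℤ) - (g : ℤ))
    (hπ0 : ∀ k : ℕ, g < k → π k = 0) :
    (∀ k : ℕ, 1 ≤ k → k ≤ g → 0 < π k) ∧
    (∀ k : ℕ, 1 ≤ k → k < g → π (k + 1) ≤ π k) ∧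
    (∀ i j : ℕ, 1 ≤ i → 1 ≤ j → ((j : ℤ) ≤ π i ↔ (i : ℤ) ≤ π j)) :=
  gap_partition_selfconjugate_general N m hN hm hcop g w hmono hmem hsurj π hπ hπ0
end

section
/- Let A be a commutative ℚ-algebra and let S ∈ A[[z]] be a formal power series whose constant term is a unit of A. Put G = S², and define a sequence R_j ∈ A[[z]] (j ≥ 1) by R₁ = G′ and R_{j+1} = (2/(j+1)) · (2 R_j′ · G − (2j−1) · R_j · G′), where ′ denotes the formal derivative d/dz. Then for every j ≥ 1 one has (2S)^{2j−1} · S^{(j)} = j! · R_j, where S^{(j)} is the j-th formal derivative of S. -/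
/-!
Put `P j = (2S)^(2j-1) * S^(j)`. Differentiating `P j` and multiplying by `(2S)² = 4G` turns the
power-rule term into `2 (2j-1) P j G′`, so `P (j+1) = 2 (2 P j′ G - (2j-1) P j G′)`; this holds for
any derivation. Hence `P j / j!` obeys the recursion defining `R j`, and induction on `j` concludes.
-/

open PowerSeries

theorem Derivation.two_mul_pow_mul_iterate_add_two {R A : Type*} [CommSemiring R] [CommRing A]
    [Algebra R A] (D : Derivation R A A) (s : A) (n : ℕ) :
    (2 * s) ^ (2 * n + 3) * D^[n + 2] s =
      2 * (2 * D ((2 * s) ^ (2 * n + 1) * D^[n + 1] s) * (s * s)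
        - (2 * n + 1) * ((2 * s) ^ (2 * n + 1) * D^[n + 1] s) * D (s * s)) := by
  have hD2 : D 2 = 0 := by simpa using D.map_natCast 2
  simp only [Derivation.leibniz, Derivation.leibniz_pow, hD2, Function.iterate_succ_apply',
    smul_eq_mul, nsmul_eq_mul]
  push_cast
  ring

set_option linter.deprecated false in
theorem PowerSeries.derivativeFun_eq_derivative {R : Type*} [CommSemiring R] :
    (derivativeFun : R⟦X⟧ → R⟦X⟧) = d⁄dX R :=
  rfl

theorem derivative_recursion_identity_general
    (A : Type*) [CommRing A] [Algebra ℚ A]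
    (S : PowerSeries A)
    (G : PowerSeries A) (hG : G = S * S)
    (R : ℕ → PowerSeries A)
    (hR1 : R 1 = derivativeFun G)
    (hRstep : ∀ j : ℕ, 1 ≤ j →
      R (j + 1) = (2 / ((j : ℚ) + 1)) •
        ((2 : A⟦X⟧) * derivativeFun (R j) * G
          - ((2 * (j : ℚ) - 1) • R j) * derivativeFun G)) :
    ∀ j : ℕ, 1 ≤ j →
      ((2 : A⟦X⟧) * S) ^ (2 * j - 1) * (derivativeFun^[j] S)
        = ((Nat.factorial j : ℚ)) • R j := by
  rw [derivativeFun_eq_derivative] at hR1 hRstep ⊢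
  subst hG
  intro j hj
  obtain ⟨n, rfl⟩ := Nat.exists_eq_add_of_le' hj
  clear hj
  induction n with
  | zero =>
    simp only [zero_add, Nat.add_one_sub_one, pow_one, Function.iterate_one, Nat.factorial_one,
      Nat.cast_one, one_smul, hR1, Derivation.leibniz, smul_eq_mul]
    ring
  | succ n ih =>
    have hfac : ((n + 2).factorial : ℚ) * (2 / ((n + 1 : ℕ) + 1)) = 2 * (n + 1).factorial := by
      push_cast [Nat.factorial_succ (n + 1)]
      field_simp
    have hcoeff : 2 * ((n + 1 : ℕ) : ℚ) - 1 = 2 * n + 1 := by push_cast; ring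
    rw [show 2 * (n + 1) - 1 = 2 * n + 1 by omega] at ih
    rw [show 2 * (n + 2) - 1 = 2 * n + 3 by omega, Derivation.two_mul_pow_mul_iterate_add_two,
      hRstep _ n.succ_pos, ih, map_rat_smul, smul_smul, hfac, hcoeff]
    simp only [Algebra.smul_def, map_add, map_mul, map_ofNat, map_one, map_natCast]
    ring

/-- Let `A` be a commutative `ℚ`-algebra and `S` a formal power series whose
constant term is a unit. Put `G = S²` and define `R₁ = G′`,
`R_{j+1} = (2/(j+1)) * (2 R_j′ G − (2j−1) R_j G′)`. Then for every `j ≥ 1` one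
has `(2S)^{2j−1} * S^{(j)} = j! * R_j`. -/
theorem derivative_recursion_identity
    (A : Type*) [CommRing A] [Algebra ℚ A]
    (S : PowerSeries A) (hS : IsUnit (constantCoeff S))
    (G : PowerSeries A) (hG : G = S * S)
    (R : ℕ → PowerSeries A)
    (hR1 : R 1 = derivativeFun G)
    (hRstep : ∀ j : ℕ, 1 ≤ j →
      R (j + 1) = (2 / ((j : ℚ) + 1)) •
        ((2 : A⟦X⟧) * derivativeFun (R j) * G
          - ((2 * (j : ℚ) - 1) • R j) * derivativeFun G)) :
    ∀ j : ℕ, 1 ≤ j →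
      ((2 : A⟦X⟧) * S) ^ (2 * j - 1) * (derivativeFun^[j] S)
        = ((Nat.factorial j : ℚ)) • R j :=
  derivative_recursion_identity_general A S G hG R hR1 hRstep
end

section
/- Let K be a commutative ℚ-algebra, let F ∈ K[x] be a polynomial, and define a sequence of polynomials R_j ∈ K[x, z] (j ≥ 1) by R₁(x, z) = −F′(x − z) and R_{j+1}(x, z) = (2/(j+1)) · ( 2 · (∂R_j/∂z)(x, z) · F(x − z) + (2j−1) · R_j(x, z) · F′(x − z) ). Then for every α ∈ K with F(α) = 0 and every j ≥ 1, one has R_j(α, 0) = −c_{j−1} · F′(α)^j, where c_i denotes the i-th Catalan number. -/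
/-!
At `z = 0, x = α` the term carrying `F(x - z)` vanishes, so `r_j = R_j(α, 0)` obeys
`r_{j+1} = 2(2j - 1)/(j + 1) · F′(α) · r_j`, and `2(2j - 1)/(j + 1) = c_j / c_{j-1}` is the
ratio of consecutive Catalan numbers.
-/

open Polynomial

theorem eval_zero_aeval_C_X_sub_X {K : Type*} [CommRing K] (G : K[X]) :
    (aeval (C X - X : K[X][X]) G).eval 0 = G := by
  induction G using Polynomial.induction_on' with
  | add p q hp hq => simp only [map_add, eval_add, hp, hq]
  | monomial n a => simp [aeval_monomial, Polynomial.algebraMap_apply, C_mul_X_pow_eq_monomial]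

theorem add_two_mul_catalan_succ (m : ℕ) :
    (m + 2) * catalan (m + 1) = 2 * (2 * m + 1) * catalan m := by
  apply Nat.eq_of_mul_eq_mul_left m.succ_pos
  calc (m + 1) * ((m + 2) * catalan (m + 1))
      = (m + 1) * (m + 1).centralBinom := by rw [← succ_mul_catalan_eq_centralBinom]
    _ = 2 * (2 * m + 1) * m.centralBinom := Nat.succ_mul_centralBinom_succ m
    _ = (m + 1) * (2 * (2 * m + 1) * catalan m) := by
      rw [← succ_mul_catalan_eq_centralBinom]; ring

theorem catalan_eq_smul_catalan_pred (K : Type*) [CommRing K] [Algebra ℚ K] {j : ℕ}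
    (hj : 1 ≤ j) :
    (catalan j : K) = (2 / ((j : ℚ) + 1) * (2 * j - 1)) • (catalan (j - 1) : K) := by
  obtain ⟨m, rfl⟩ : ∃ m, j = m + 1 := ⟨j - 1, by omega⟩
  have h := congrArg (Nat.cast : ℕ → ℚ) (add_two_mul_catalan_succ m)
  have hℚ :
      2 / ((m + 1 : ℕ) + 1 : ℚ) * (2 * (m + 1 : ℕ) - 1) * catalan m = catalan (m + 1) := by
    push_cast at h ⊢
    field_simp
    linarith
  rw [Algebra.smul_def, Nat.add_sub_cancel, ← map_natCast (algebraMap ℚ K) (catalan m),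
    ← map_mul, hℚ, map_natCast]

theorem eq_neg_catalan_mul_pow_of_recurrence {K : Type*} [CommRing K] [Algebra ℚ K]
    (a : ℕ → K) (d : K) (h1 : a 1 = -d)
    (hstep : ∀ j : ℕ, 1 ≤ j →
      a (j + 1) = (2 / ((j : ℚ) + 1) * (2 * j - 1)) • (a j * d)) :
    ∀ j : ℕ, 1 ≤ j → a j = -(catalan (j - 1) : K) * d ^ j := by
  intro j hj
  induction j, hj using Nat.le_induction with
  | base => simp [h1]
  | succ j hj ih =>
    rw [hstep j hj, ih, Nat.add_sub_cancel, catalan_eq_smul_catalan_pred K hj]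
    simp only [smul_mul_assoc, neg_mul, smul_neg, pow_succ, mul_assoc]

/-- Let `K` be a commutative `ℚ`-algebra and `F ∈ K[x]`. Viewing `K[x,z]` as
`(K[x])[z]` (outer variable `z`, with `x = C X`), define `R₁ = −F′(x−z)` and
`R_{j+1} = (2/(j+1)) * (2 (∂R_j/∂z) F(x−z) + (2j−1) R_j F′(x−z))`. Then for
every root `α` of `F` and every `j ≥ 1`, `R_j(α, 0) = −c_{j−1} F′(α)^j`,
where `c_i` is the `i`-th Catalan number. -/
theorem division_polynomial_value_at_root
    (K : Type*) [CommRing K] [Algebra ℚ K]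
    (F : Polynomial K)
    (R : ℕ → Polynomial (Polynomial K))
    (hR1 : R 1 = - Polynomial.aeval
      ((C X : Polynomial (Polynomial K)) - X) (derivative F))
    (hRstep : ∀ j : ℕ, 1 ≤ j →
      R (j + 1) = (2 / ((j : ℚ) + 1)) •
        ((2 : Polynomial (Polynomial K)) * derivative (R j)
            * Polynomial.aeval ((C X : Polynomial (Polynomial K)) - X) F
          + ((2 * (j : ℚ) - 1) • R j)
            * Polynomial.aeval ((C X : Polynomial (Polynomial K)) - X)
                (derivative F))) :
    ∀ α : K, F.eval α = 0 → ∀ j : ℕ, 1 ≤ j →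
      ((R j).eval (0 : Polynomial K)).eval α
        = - (catalan (j - 1) : K) * ((derivative F).eval α) ^ j := by
  intro α hα
  apply eq_neg_catalan_mul_pow_of_recurrence (fun j ↦ ((R j).eval 0).eval α)
  · simp [hR1, eval_zero_aeval_C_X_sub_X]
  · intro j hj
    simp only [hRstep j hj, eval_smul, eval_add, eval_mul, eval_zero_aeval_C_X_sub_X, hα,
      mul_zero, zero_add, smul_mul_assoc, smul_smul]
end

section
/- For all integers l ≥ 1 and m ≥ 1, the m × m Hankel determinant of Catalan numbers det( c_{l+i+j−2} )_{1 ≤ i,j ≤ m} equals ∏_{1 ≤ i ≤ j ≤ l−1} (i + j + 2m)/(i + j), as an identity of rational numbers. -/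
/-!
Both sides satisfy Dodgson condensation in `m`. The Desnanot–Jacobi identity for the
`(m + 2) × (m + 2)` Hankel matrix at `l` involves only Hankel determinants of sizes `m + 1` and `m`
at `l`, `l + 1`, `l + 2`, because deleting the first or last row or column of a Hankel matrix shifts
`l`. The product, written in factorial form as `∏_{j < l} (2m + 2j)! j! / ((2m + j)! (2j)!)`,
satisfies the same quadratic recurrence; it is positive, so the interior minor of size `m` can be
cancelled, and both sides agree for `m = 0` and for `m = 1`, where the determinant is `c_l`.
-/

open scoped Nat
open Finset

noncomputable def finInteriorSumEquiv (n : ℕ) : Fin n ⊕ Fin 2 ≃ Fin (n + 2) :=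
  Equiv.ofBijective (Sum.elim (fun k => k.succ.castSucc) ![0, Fin.last (n + 1)]) <| by
    rw [Fintype.bijective_iff_injective_and_card]
    refine ⟨?_, by simp⟩
    rintro (i | a) (j | b) h
    · simpa [Fin.ext_iff] using h
    all_goals (try fin_cases a) <;> (try fin_cases b) <;> simp [Fin.ext_iff] at h ⊢ <;> omega

namespace Matrix

variable {R : Type*} [CommRing R]

theorem det_submatrix_mul_det_submatrix {α β : Type*} [Fintype α] [DecidableEq α] [Fintype β]
    [DecidableEq β] (e f : α ≃ β) (A B : Matrix β β R) :
    (A.submatrix e f).det * (B.submatrix f e).det = A.det * B.det := by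
  have hA : A.submatrix e f = (A.submatrix f f).submatrix (e.trans f.symm) id := by
    ext; simp
  have hB : B.submatrix f e = (B.submatrix e e).submatrix (e.trans f.symm).symm id := by
    ext; simp
  rw [hA, hB, det_permute, det_permute, Equiv.Perm.sign_symm, det_submatrix_equiv_self,
    det_submatrix_equiv_self, mul_mul_mul_comm, ← Int.cast_mul, ← Units.val_mul,
    Int.units_mul_self, Units.val_one, Int.cast_one, one_mul]

section Bordered

variable {ι : Type*} [Fintype ι] [DecidableEq ι]

def borderedMinor (M : Matrix (ι ⊕ Fin 2) (ι ⊕ Fin 2) R) (a b : Fin 2) : R :=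
  (M.submatrix (Sum.map id fun _ : Unit => a) (Sum.map id fun _ : Unit => b)).det

/-- Each bordered minor is `det P` times an entry of the `2 × 2` Schur complement of the
interior block `P`, whose determinant gives `det M / det P`. -/
theorem det_mul_det_toBlocks₁₁ (M : Matrix (ι ⊕ Fin 2) (ι ⊕ Fin 2) R)
    (hP : IsUnit M.toBlocks₁₁.det) :
    M.det * M.toBlocks₁₁.det =
      M.borderedMinor 0 0 * M.borderedMinor 1 1 - M.borderedMinor 0 1 * M.borderedMinor 1 0 := by
  let _ := M.toBlocks₁₁.invertibleOfIsUnitDet hP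
  set S := M.toBlocks₂₂ - M.toBlocks₂₁ * ⅟M.toBlocks₁₁ * M.toBlocks₁₂
  have hM : M.det = M.toBlocks₁₁.det * S.det := by
    conv_lhs => rw [← M.fromBlocks_toBlocks]
    exact det_fromBlocks₁₁ ..
  have hminor (a b : Fin 2) : M.borderedMinor a b = M.toBlocks₁₁.det * S a b := by
    rw [borderedMinor, ← fromBlocks_toBlocks (M.submatrix _ _)]
    exact (det_fromBlocks₁₁ M.toBlocks₁₁ ..).trans (congrArg _ (det_unique _))
  rw [hM, det_fin_two, hminor, hminor, hminor, hminor]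
  ring

end Bordered

theorem desnanot_jacobi {n : ℕ} (M : Matrix (Fin (n + 2)) (Fin (n + 2)) R)
    (h : IsUnit (M.submatrix (fun k : Fin n => k.succ.castSucc) fun k => k.succ.castSucc).det) :
    M.det * (M.submatrix (fun k : Fin n => k.succ.castSucc) fun k => k.succ.castSucc).det =
      (M.submatrix Fin.castSucc Fin.castSucc).det * (M.submatrix Fin.succ Fin.succ).det -
        (M.submatrix Fin.castSucc Fin.succ).det * (M.submatrix Fin.succ Fin.castSucc).det := by
  -- Moving the interior to the front turns the four corner minors into bordered minors up to the
  -- reindexings `e₀` (border first) and `eL` (border last); the off-diagonal pair carries the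
  -- same permutation sign twice.
  let e₀ : Fin n ⊕ Unit ≃ Fin (n + 1) :=
    (Equiv.optionEquivSumPUnit (Fin n)).symm.trans (finSuccEquiv n).symm
  let eL : Fin n ⊕ Unit ≃ Fin (n + 1) :=
    (Equiv.optionEquivSumPUnit (Fin n)).symm.trans finSuccEquivLast.symm
  have h₀ : finInteriorSumEquiv n ∘ Sum.map id (fun _ : Unit => 0) = Fin.castSucc ∘ e₀ := by
    funext x; rcases x with k | _ <;> simp [e₀, finInteriorSumEquiv]
  have hL : finInteriorSumEquiv n ∘ Sum.map id (fun _ : Unit => 1) = Fin.succ ∘ eL := by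
    funext x; rcases x with k | _ <;> simp [eL, finInteriorSumEquiv]
  have key :=
    (M.submatrix (finInteriorSumEquiv n) (finInteriorSumEquiv n)).det_mul_det_toBlocks₁₁ h
  simp only [borderedMinor, submatrix_submatrix, h₀, hL, det_submatrix_equiv_self] at key
  rw [← det_submatrix_equiv_self e₀ (M.submatrix Fin.castSucc Fin.castSucc),
    ← det_submatrix_equiv_self eL (M.submatrix Fin.succ Fin.succ),
    ← det_submatrix_mul_det_submatrix e₀ eL]
  exact key

end Matrix

theorem prod_Icc_natCast_add (a j : ℕ) : ∏ i ∈ Icc 1 j, ((i : ℚ) + a) = (a + j)! / a ! := by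
  induction j with
  | zero => simp [Nat.factorial_ne_zero]
  | succ j ih =>
    rw [prod_Icc_succ_top (by omega), ih, ← add_assoc, Nat.factorial_succ]
    push_cast
    field_simp
    ring

noncomputable def catalanHankelFactor (j m : ℕ) : ℚ :=
  (2 * m + 2 * j)! * j ! / ((2 * m + j)! * (2 * j)!)

theorem prod_Icc_eq_catalanHankelFactor (j m : ℕ) :
    ∏ i ∈ Icc 1 j, (((i : ℚ) + j + 2 * m) / ((i : ℚ) + j)) = catalanHankelFactor j m := by
  have num : ∏ i ∈ Icc 1 j, ((i : ℚ) + j + 2 * m) = (2 * m + 2 * j)! / (2 * m + j)! := by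
    rw [show 2 * m + 2 * j = 2 * m + j + j by ring, ← prod_Icc_natCast_add]
    exact prod_congr rfl fun i _ => by push_cast; ring
  rw [prod_div_distrib, num, prod_Icc_natCast_add, ← two_mul, catalanHankelFactor]
  field_simp

noncomputable def catalanHankelProd (l m : ℕ) : ℚ :=
  ∏ j ∈ range l, catalanHankelFactor j m

noncomputable def catalanHankelRatio (l m : ℕ) : ℚ :=
  (2 * m + 2 * l)! * (2 * m + 1)! / ((2 * m + l + 1)! * (2 * m + l)!)

theorem catalanHankelProd_succ (l m : ℕ) :
    catalanHankelProd (l + 1) m = catalanHankelProd l m * catalanHankelFactor l m :=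
  prod_range_succ _ _

theorem catalanHankelProd_pos (l m : ℕ) : 0 < catalanHankelProd l m :=
  prod_pos fun j _ => by unfold catalanHankelFactor; positivity

theorem catalanHankelProd_zero_right (l : ℕ) : catalanHankelProd l 0 = 1 :=
  prod_eq_one fun j _ => by simp [catalanHankelFactor, mul_comm, Nat.factorial_ne_zero]

theorem cast_catalan_eq_factorial_div (n : ℕ) :
    (catalan n : ℚ) = (2 * n)! / (n ! * (n + 1)!) := by
  have h : ((n + 1 : ℕ) * catalan n : ℚ) = (2 * n).choose n := by
    exact_mod_cast succ_mul_catalan_eq_centralBinom n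
  rw [Nat.cast_choose ℚ (by omega), show 2 * n - n = n by omega, eq_div_iff (by positivity)] at h
  rw [Nat.factorial_succ, eq_div_iff (by positivity), ← h]
  push_cast
  ring

theorem catalanHankelProd_one_right (l : ℕ) : catalanHankelProd l 1 = catalan l := by
  rw [cast_catalan_eq_factorial_div]
  induction l with
  | zero => simp [catalanHankelProd]
  | succ l ih =>
    rw [catalanHankelProd_succ, ih, catalanHankelFactor]
    -- peel the numerals off every factorial argument, reducing all factorials to a few base ones
    simp only [Nat.mul_succ, Nat.mul_zero, Nat.zero_add, Nat.add_succ, Nat.succ_add,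
      Nat.factorial_succ]
    push_cast
    field_simp

theorem catalanHankelRatio_mul_factor (l m : ℕ) :
    catalanHankelRatio l m * catalanHankelFactor l (m + 1) =
      catalanHankelFactor l m * catalanHankelRatio (l + 1) m := by
  unfold catalanHankelRatio catalanHankelFactor
  simp only [Nat.mul_succ, Nat.add_succ, Nat.succ_add, Nat.factorial_succ]
  push_cast
  field_simp

theorem catalanHankelProd_succ_right (l m : ℕ) :
    catalanHankelProd l (m + 1) = catalanHankelProd l m * catalanHankelRatio l m := by
  induction l with
  | zero => simp [catalanHankelProd, catalanHankelRatio]; field_simp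
  | succ l ih =>
    rw [catalanHankelProd_succ, catalanHankelProd_succ, ih, mul_assoc,
      catalanHankelRatio_mul_factor, mul_assoc]

/-- What is left of `catalanHankelProd_condensation` once every term is written through
`catalanHankelProd l m` and the common factor `catalanHankelProd l m ^ 2 * catalanHankelFactor l m`
is cancelled. -/
theorem catalanHankelFactor_ratio_condensation (l m : ℕ) :
    catalanHankelRatio l (m + 1) * catalanHankelFactor (l + 1) m * catalanHankelRatio l m =
      catalanHankelFactor (l + 1) m * catalanHankelRatio l m * catalanHankelRatio (l + 2) m -
        catalanHankelFactor l m * catalanHankelRatio (l + 1) m ^ 2 := by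
  unfold catalanHankelRatio catalanHankelFactor
  simp only [Nat.mul_succ, Nat.add_succ, Nat.succ_add, Nat.factorial_succ]
  push_cast
  field_simp
  ring

theorem catalanHankelProd_condensation (l m : ℕ) :
    catalanHankelProd l (m + 2) * catalanHankelProd (l + 2) m =
      catalanHankelProd l (m + 1) * catalanHankelProd (l + 2) (m + 1) -
        catalanHankelProd (l + 1) (m + 1) ^ 2 := by
  simp only [catalanHankelProd_succ_right, catalanHankelProd_succ]
  linear_combination catalanHankelProd l m ^ 2 * catalanHankelFactor l m *
    catalanHankelFactor_ratio_condensation l m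

def catalanHankel (l m : ℕ) : Matrix (Fin m) (Fin m) ℚ :=
  Matrix.of fun i j => (catalan (l + i + j) : ℚ)

theorem catalanHankel_submatrix {l l' m p : ℕ} (f g : Fin p → Fin m)
    (h : ∀ i j, l + f i + g j = l' + i + j) :
    (catalanHankel l m).submatrix f g = catalanHankel l' p := by
  ext i j
  simp [catalanHankel, h]

theorem det_catalanHankel_condensation (l m : ℕ) (h : (catalanHankel (l + 2) m).det ≠ 0) :
    (catalanHankel l (m + 2)).det * (catalanHankel (l + 2) m).det =
      (catalanHankel l (m + 1)).det * (catalanHankel (l + 2) (m + 1)).det -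
        (catalanHankel (l + 1) (m + 1)).det ^ 2 := by
  have interior : (catalanHankel l (m + 2)).submatrix (fun k : Fin m => k.succ.castSucc)
      (fun k => k.succ.castSucc) = catalanHankel (l + 2) m :=
    catalanHankel_submatrix _ _ fun i j => by simp; omega
  have hD := (catalanHankel l (m + 2)).desnanot_jacobi (by rwa [interior, isUnit_iff_ne_zero])
  rwa [interior, catalanHankel_submatrix Fin.castSucc Fin.castSucc (l' := l) (by simp),
    catalanHankel_submatrix Fin.succ Fin.succ (l' := l + 2) (by simp; omega),
    catalanHankel_submatrix Fin.castSucc Fin.succ (l' := l + 1) (by simp; omega),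
    catalanHankel_submatrix Fin.succ Fin.castSucc (l' := l + 1) (by simp; omega), ← sq] at hD

theorem det_catalanHankel (l m : ℕ) : (catalanHankel l m).det = catalanHankelProd l m := by
  induction m using Nat.twoStepInduction generalizing l with
  | zero => rw [Matrix.det_isEmpty, catalanHankelProd_zero_right]
  | one => simp [catalanHankel, catalanHankelProd_one_right]
  | more m ih ih' =>
    have h := det_catalanHankel_condensation l m (by rw [ih]; exact (catalanHankelProd_pos _ _).ne')
    rw [ih, ih', ih', ih', ← catalanHankelProd_condensation] at h
    exact mul_right_cancel₀ (catalanHankelProd_pos _ _).ne' h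

theorem catalan_hankel_det_general
    (l m : ℕ) :
    Matrix.det (Matrix.of fun i j : Fin m => (catalan (l + i + j) : ℚ))
      = ∏ i ∈ Finset.Icc 1 (l - 1), ∏ j ∈ Finset.Icc i (l - 1),
          (((i : ℚ) + j + 2 * m) / ((i : ℚ) + j)) := by
  rw [prod_comm' (t' := range l) (s' := fun j => Icc 1 j) fun i j => by
    simp only [mem_Icc, mem_range]; omega]
  exact (det_catalanHankel l m).trans
    (prod_congr rfl fun j _ => (prod_Icc_eq_catalanHankelFactor j m).symm)

/-- Hankel determinant identity of Desainte-Catherine and Viennot: for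
`l, m ≥ 1`, the `m × m` determinant `det(c_{l+i+j−2})_{1 ≤ i,j ≤ m}` of
Catalan numbers equals `∏_{1 ≤ i ≤ j ≤ l−1} (i + j + 2m)/(i + j)`. -/
theorem catalan_hankel_det
    (l m : ℕ) (hl : 1 ≤ l) (hm : 1 ≤ m) :
    Matrix.det (Matrix.of fun i j : Fin m => (catalan (l + i + j) : ℚ))
      = ∏ i ∈ Finset.Icc 1 (l - 1), ∏ j ∈ Finset.Icc i (l - 1),
          (((i : ℚ) + j + 2 * m) / ((i : ℚ) + j)) :=
  catalan_hankel_det_general l m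
end
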